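/- For smooth A, B, C : ℝ^{2d} → ℝ^{2d} the Jacobiator of the untwisted C-bracket satisfies, for every index L: [[[[A,B]],C]]^L + [[[[B,C]],A]]^L + [[[[C,A]],B]]^L = (𝒟𝒩(A,B,C))^L + SC_Jac(A,B,C)^L, where 𝒩(A,B,C) := ⅓( η_{IJ}[[A,B]]^I C^J + η_{IJ}[[B,C]]^I A^J + η_{IJ}[[C,A]]^I B^J ), (𝒟f)^L := ½ η^{LK} ∂_K f, and SC_Jac(A,B,C)^L := −½( A^I ∂_J B_I − B^I ∂_J A_I ) ∂^J C^L + cyclic permutations in (A,B,C). In particular, if the strong constraint η^{IJ} ∂_I f ∂_J g = 0 holds for every pair of component functions of A, B, C, then the Jacobiator equals 𝒟𝒩(A,B,C), as for a Courant algebroid. -/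

import Mathlib

open scoped BigOperators

noncomputable section

/-- Doubled index set: `I = 1,…,2d`, realized as `Fin d ⊕ Fin d`. -/
abbrev DIdx (d : ℕ) := Fin d ⊕ Fin d

/-- The doubled space `ℝ^{2d}`. -/
abbrev DSpace (d : ℕ) := DIdx d → ℝ

/-- The constant O(d,d)-invariant metric `η = ((0,1_d),(1_d,0))`; numerically `η⁻¹ = η`. -/
def eta {d : ℕ} : DIdx d → DIdx d → ℝ
  | Sum.inl i, Sum.inr j => if i = j then 1 else 0
  | Sum.inr i, Sum.inl j => if i = j then 1 else 0
  | _, _ => 0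

/-- Partial derivative `∂_I f (x)`. -/
def pd {d : ℕ} (f : DSpace d → ℝ) (I : DIdx d) (x : DSpace d) : ℝ :=
  fderiv ℝ f x (Pi.single I 1)

/-- Lowered components `A_I := η_{IJ} A^J`. -/
def low {d : ℕ} (A : DSpace d → DSpace d) (I : DIdx d) : DSpace d → ℝ :=
  fun x => ∑ J, eta I J * A x J

/-- Raised derivative `∂^I f := η^{IJ} ∂_J f`. -/
def pdU {d : ℕ} (f : DSpace d → ℝ) (I : DIdx d) (x : DSpace d) : ℝ :=
  ∑ J, eta I J * pd f J x

/-- The flat untwisted C-bracket `[[A,B]]^J := A^K ∂_K B^J − ½ A^K ∂^J B_K − (A ↔ B)`. -/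
def cbC {d : ℕ} (A B : DSpace d → DSpace d) (J : DIdx d) (x : DSpace d) : ℝ :=
  ∑ K, (A x K * pd (fun y => B y J) K x - (1/2) * A x K * pdU (low B K) J x
      - B x K * pd (fun y => A y J) K x + (1/2) * B x K * pdU (low A K) J x)

/-- The Nijenhuis operator
`𝒩(A,B,C) := ⅓( η_{IJ}[[A,B]]^I C^J + η_{IJ}[[B,C]]^I A^J + η_{IJ}[[C,A]]^I B^J )`. -/
def nij {d : ℕ} (A B C : DSpace d → DSpace d) (y : DSpace d) : ℝ :=
  (1/3) * ((∑ I, ∑ J, eta I J * cbC A B I y * C y J)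
    + (∑ I, ∑ J, eta I J * cbC B C I y * A y J)
    + (∑ I, ∑ J, eta I J * cbC C A I y * B y J))

/-- One cyclic summand of the strong-constraint obstruction
`−½( A^I ∂_J B_I − B^I ∂_J A_I ) ∂^J C^L`. -/
def scJ {d : ℕ} (A B C : DSpace d → DSpace d) (L : DIdx d) (x : DSpace d) : ℝ :=
  -(1/2) * ∑ J, (∑ I, (A x I * pd (low B I) J x - B x I * pd (low A I) J x))
      * pdU (fun y => C y L) J x


namespace St14

open Finset

variable {d : ℕ}

/-- The swap `inl ↔ inr` implementing contraction with `η`. -/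
abbrev sw {d : ℕ} : DIdx d → DIdx d := Sum.swap

lemma sw_sw (I : DIdx d) : sw (sw I) = I := Sum.swap_swap I

lemma eta_eq (I J : DIdx d) : eta I J = if J = sw I then (1:ℝ) else 0 := by
  cases I <;> cases J <;> simp [eta, Sum.swap, eq_comm]

lemma sum_eta (I : DIdx d) (f : DIdx d → ℝ) : ∑ J, eta I J * f J = f (sw I) := by
  simp [eta_eq, ite_mul]

lemma low_eq (B : DSpace d → DSpace d) (K : DIdx d) :
    low B K = fun x => B x (sw K) := by
  funext x
  exact sum_eta K (fun J => B x J)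

lemma pdU_eq (f : DSpace d → ℝ) (I : DIdx d) (x : DSpace d) :
    pdU f I x = pd f (sw I) x :=
  sum_eta I (fun J => pd f J x)

lemma comp_contDiff {A : DSpace d → DSpace d} (hA : ContDiff ℝ (⊤ : ℕ∞) A) (K : DIdx d) :
    ContDiff ℝ (⊤ : ℕ∞) (fun y => A y K) :=
  contDiff_pi.mp hA K

lemma pd_contDiff {f : DSpace d → ℝ} (hf : ContDiff ℝ (⊤ : ℕ∞) f) (I : DIdx d) :
    ContDiff ℝ (⊤ : ℕ∞) (pd f I) := by
  have h1 : ContDiff ℝ (⊤ : ℕ∞) (fderiv ℝ f) := hf.fderiv_right (by simp)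
  exact (ContinuousLinearMap.apply ℝ ℝ (Pi.single I 1)).contDiff.comp h1

lemma pd_add {f g : DSpace d → ℝ} {x : DSpace d} (hf : DifferentiableAt ℝ f x)
    (hg : DifferentiableAt ℝ g x) (I : DIdx d) :
    pd (fun y => f y + g y) I x = pd f I x + pd g I x := by
  unfold pd
  rw [fderiv_fun_add hf hg]
  rfl

lemma pd_sub {f g : DSpace d → ℝ} {x : DSpace d} (hf : DifferentiableAt ℝ f x)
    (hg : DifferentiableAt ℝ g x) (I : DIdx d) :
    pd (fun y => f y - g y) I x = pd f I x - pd g I x := by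
  unfold pd
  rw [fderiv_fun_sub hf hg]
  rfl

lemma pd_mul {f g : DSpace d → ℝ} {x : DSpace d} (hf : DifferentiableAt ℝ f x)
    (hg : DifferentiableAt ℝ g x) (I : DIdx d) :
    pd (fun y => f y * g y) I x = pd f I x * g x + f x * pd g I x := by
  unfold pd
  rw [fderiv_fun_mul hf hg]
  simp [ContinuousLinearMap.add_apply, ContinuousLinearMap.smul_apply]
  ring

lemma pd_const_mul {g : DSpace d → ℝ} {x : DSpace d} (hg : DifferentiableAt ℝ g x)
    (c : ℝ) (I : DIdx d) :
    pd (fun y => c * g y) I x = c * pd g I x := by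
  unfold pd
  rw [fderiv_const_mul hg c]
  rfl

lemma pd_sum {ι : Type*} [Fintype ι] {f : ι → DSpace d → ℝ} {x : DSpace d}
    (hf : ∀ K, DifferentiableAt ℝ (f K) x) (I : DIdx d) :
    pd (fun y => ∑ K, f K y) I x = ∑ K, pd (f K) I x := by
  unfold pd
  rw [fderiv_fun_sum (fun K _ => hf K)]
  exact ContinuousLinearMap.sum_apply _ _ _

lemma pd_swap {f : DSpace d → ℝ} (hf : ContDiff ℝ (⊤ : ℕ∞) f) (I J : DIdx d) (x : DSpace d) :
    pd (pd f J) I x = pd (pd f I) J x := by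
  have hdf : ContDiff ℝ (⊤ : ℕ∞) (fderiv ℝ f) := hf.fderiv_right (by simp)
  have hder : ∀ v : DSpace d, ∀ x,
      fderiv ℝ (fun y => fderiv ℝ f y v) x = (fderiv ℝ (fderiv ℝ f) x).flip v := by
    intro v x
    have h := fderiv_clm_apply (c := fderiv ℝ f) (u := fun _ => v)
      (hdf.differentiable (by simp) x) (differentiableAt_const v)
    rw [h]
    ext w
    simp
  have hsym := second_derivative_symmetric (f := f) (f' := fderiv ℝ f)
    (f'' := fderiv ℝ (fderiv ℝ f) x)
    (fun y => (hf.differentiable (by simp) y).hasFDerivAt)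
    ((hdf.differentiable (by simp) x).hasFDerivAt)
    (Pi.single I 1) (Pi.single J 1)
  show fderiv ℝ (fun y => fderiv ℝ f y (Pi.single J 1)) x (Pi.single I 1)
      = fderiv ℝ (fun y => fderiv ℝ f y (Pi.single I 1)) x (Pi.single J 1)
  rw [hder, hder]
  simpa using hsym

end St14
namespace St14

open Finset

variable {d : ℕ}

lemma pd_const (c : ℝ) (I : DIdx d) (x : DSpace d) : pd (fun _ => c) I x = 0 := by
  unfold pd
  rw [fderiv_fun_const]
  rfl

lemma sum_sw (φ : DIdx d → ℝ) : ∑ i, φ (sw i) = ∑ i, φ i :=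
  Fintype.sum_equiv (Equiv.sumComm (Fin d) (Fin d)) _ _ (fun _ => rfl)

/-- first derivative atoms -/
def d1 (A : DSpace d → DSpace d) (x : DSpace d) : DIdx d → DIdx d → ℝ :=
  fun p q => pd (fun y => A y q) p x

/-- second derivative atoms -/
def d2 (A : DSpace d → DSpace d) (x : DSpace d) : DIdx d → DIdx d → DIdx d → ℝ :=
  fun p q r => pd (fun y => pd (fun z => A z r) q y) p x

def Fs (a b : DIdx d → ℝ) (da db : DIdx d → DIdx d → ℝ) (M J : DIdx d) : ℝ :=
  a M * db M J - 1/2 * a M * db (sw J) (sw M) - b M * da M J + 1/2 * b M * da (sw J) (sw M)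

def dFs (a b : DIdx d → ℝ) (da db : DIdx d → DIdx d → ℝ)
    (dda ddb : DIdx d → DIdx d → DIdx d → ℝ) (M P J : DIdx d) : ℝ :=
  (da P M * db M J + a M * ddb P M J)
  - 1/2 * (da P M * db (sw J) (sw M) + a M * ddb P (sw J) (sw M))
  - (db P M * da M J + b M * dda P M J)
  + 1/2 * (db P M * da (sw J) (sw M) + b M * dda P (sw J) (sw M))

lemma cbC_eq (A B : DSpace d → DSpace d) (J : DIdx d) (x : DSpace d) :
    cbC A B J x = ∑ K, (A x K * pd (fun y => B y J) K x
      - 1/2 * A x K * pd (fun y => B y (sw K)) (sw J) x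
      - B x K * pd (fun y => A y J) K x
      + 1/2 * B x K * pd (fun y => A y (sw K)) (sw J) x) := by
  unfold cbC
  refine Finset.sum_congr rfl fun K _ => ?_
  rw [pdU_eq, pdU_eq, low_eq, low_eq]

lemma cbC_eq' (A B : DSpace d → DSpace d) (J : DIdx d) (x : DSpace d) :
    cbC A B J x = ∑ M, Fs (A x) (B x) (d1 A x) (d1 B x) M J := by
  rw [cbC_eq]
  refine Finset.sum_congr rfl fun M _ => ?_
  simp only [Fs, d1]

lemma cbC_contDiff {A B : DSpace d → DSpace d} (hA : ContDiff ℝ (⊤ : ℕ∞) A)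
    (hB : ContDiff ℝ (⊤ : ℕ∞) B) (J : DIdx d) :
    ContDiff ℝ (⊤ : ℕ∞) (fun y => cbC A B J y) := by
  have h : (fun y => cbC A B J y) = fun y => ∑ K, (A y K * pd (fun z => B z J) K y
      - 1/2 * A y K * pd (fun z => B z (sw K)) (sw J) y
      - B y K * pd (fun z => A z J) K y
      + 1/2 * B y K * pd (fun z => A z (sw K)) (sw J) y) :=
    funext fun y => cbC_eq A B J y
  rw [h]
  have cA := comp_contDiff hA
  have cB := comp_contDiff hB
  apply ContDiff.sum
  intro K _
  exact ((((cA K).mul (pd_contDiff (cB J) K)).sub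
      ((contDiff_const.mul (cA K)).mul (pd_contDiff (cB (sw K)) (sw J)))).sub
      ((cB K).mul (pd_contDiff (cA J) K))).add
      ((contDiff_const.mul (cB K)).mul (pd_contDiff (cA (sw K)) (sw J)))

lemma pd_cbC {A B : DSpace d → DSpace d} (hA : ContDiff ℝ (⊤ : ℕ∞) A) (hB : ContDiff ℝ (⊤ : ℕ∞) B)
    (J P : DIdx d) (x : DSpace d) :
    pd (fun y => cbC A B J y) P x
      = ∑ M, dFs (A x) (B x) (d1 A x) (d1 B x) (d2 A x) (d2 B x) M P J := by
  have dA : ∀ K, Differentiable ℝ (fun y => A y K) :=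
    fun K => (comp_contDiff hA K).differentiable (by simp)
  have dB : ∀ K, Differentiable ℝ (fun y => B y K) :=
    fun K => (comp_contDiff hB K).differentiable (by simp)
  have dpA : ∀ I K, Differentiable ℝ (fun y => pd (fun z => A z I) K y) :=
    fun I K => (pd_contDiff (comp_contDiff hA I) K).differentiable (by simp)
  have dpB : ∀ I K, Differentiable ℝ (fun y => pd (fun z => B z I) K y) :=
    fun I K => (pd_contDiff (comp_contDiff hB I) K).differentiable (by simp)
  have h : (fun y => cbC A B J y) = fun y => ∑ K, (A y K * pd (fun z => B z J) K y
      - 1/2 * A y K * pd (fun z => B z (sw K)) (sw J) y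
      - B y K * pd (fun z => A z J) K y
      + 1/2 * B y K * pd (fun z => A z (sw K)) (sw J) y) :=
    funext fun y => cbC_eq A B J y
  rw [h, pd_sum (fun K => by fun_prop) P]
  refine Finset.sum_congr rfl fun M _ => ?_
  simp (disch := fun_prop) only [pd_add, pd_sub, pd_mul, pd_const]
  simp only [dFs, d1, d2]
  ring

end St14
namespace St14

open Finset

variable {d : ℕ}

def J1 (a b c : DIdx d → ℝ) (da db dc : DIdx d → DIdx d → ℝ)
    (dda ddb : DIdx d → DIdx d → DIdx d → ℝ) (L K M : DIdx d) : ℝ :=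
  Fs a b da db M K * dc K L - 1/2 * (Fs a b da db M K * dc (sw L) (sw K))
  - c K * dFs a b da db dda ddb M K L
  + 1/2 * (c K * dFs a b da db dda ddb M (sw L) (sw K))

def Jn (a b c : DIdx d → ℝ) (da db dc : DIdx d → DIdx d → ℝ)
    (dda ddb ddc : DIdx d → DIdx d → DIdx d → ℝ) (P K M : DIdx d) : ℝ :=
  1/3 * (dFs a b da db dda ddb M P K * c (sw K) + Fs a b da db M K * dc P (sw K)
  + dFs b c db dc ddb ddc M P K * a (sw K) + Fs b c db dc M K * da P (sw K)
  + dFs c a dc da ddc dda M P K * b (sw K) + Fs c a dc da M K * db P (sw K))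

def Jsc (a b : DIdx d → ℝ) (da db dc : DIdx d → DIdx d → ℝ) (L K M : DIdx d) : ℝ :=
  -(1/2) * ((a M * db K (sw M) - b M * da K (sw M)) * dc (sw K) L)

lemma Touter {A B : DSpace d → DSpace d} (C : DSpace d → DSpace d)
    (hA : ContDiff ℝ (⊤ : ℕ∞) A) (hB : ContDiff ℝ (⊤ : ℕ∞) B) (L : DIdx d) (x : DSpace d) :
    cbC (fun y M => cbC A B M y) C L x
      = ∑ K, ∑ M, J1 (A x) (B x) (C x) (d1 A x) (d1 B x) (d1 C x)
          (d2 A x) (d2 B x) L K M := by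
  rw [cbC_eq (fun y M => cbC A B M y) C L x]
  refine Finset.sum_congr rfl fun K _ => ?_
  rw [pd_cbC hA hB L K x, pd_cbC hA hB (sw K) (sw L) x, cbC_eq' A B K x]
  simp only [Finset.sum_mul, Finset.mul_sum, ← Finset.sum_sub_distrib,
    ← Finset.sum_add_distrib]
  refine Finset.sum_congr rfl fun M _ => ?_
  simp only [J1, d1]
  ring

lemma nij_contract (X Y Z : DSpace d → DSpace d) (y : DSpace d) :
    (∑ I, ∑ J, eta I J * cbC X Y I y * Z y J) = ∑ I, cbC X Y I y * Z y (sw I) := by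
  refine Finset.sum_congr rfl fun I _ => ?_
  have h1 : ∑ J, eta I J * cbC X Y I y * Z y J
      = ∑ J, eta I J * (cbC X Y I y * Z y J) :=
    Finset.sum_congr rfl fun J _ => by ring
  rw [h1, sum_eta I (fun J => cbC X Y I y * Z y J)]

lemma pd_cb_mul {A B : DSpace d → DSpace d} (Z : DSpace d → DSpace d)
    (hA : ContDiff ℝ (⊤ : ℕ∞) A) (hB : ContDiff ℝ (⊤ : ℕ∞) B) (hZ : ContDiff ℝ (⊤ : ℕ∞) Z)
    (I P : DIdx d) (x : DSpace d) :
    pd (fun y => cbC A B I y * Z y (sw I)) P x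
      = ∑ M, (dFs (A x) (B x) (d1 A x) (d1 B x) (d2 A x) (d2 B x) M P I * Z x (sw I)
          + Fs (A x) (B x) (d1 A x) (d1 B x) M I * d1 Z x P (sw I)) := by
  rw [pd_mul ((cbC_contDiff hA hB I).differentiable (by simp)).differentiableAt
    ((comp_contDiff hZ (sw I)).differentiable (by simp)).differentiableAt P]
  rw [pd_cbC hA hB I P x, cbC_eq' A B I x]
  rw [Finset.sum_mul, Finset.sum_mul, ← Finset.sum_add_distrib]
  exact Finset.sum_congr rfl fun M _ => by simp only [d1]

lemma pd_nij {A B C : DSpace d → DSpace d} (hA : ContDiff ℝ (⊤ : ℕ∞) A) (hB : ContDiff ℝ (⊤ : ℕ∞) B)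
    (hC : ContDiff ℝ (⊤ : ℕ∞) C) (P : DIdx d) (x : DSpace d) :
    pd (nij A B C) P x
      = ∑ K, ∑ M, Jn (A x) (B x) (C x) (d1 A x) (d1 B x) (d1 C x)
          (d2 A x) (d2 B x) (d2 C x) P K M := by
  have cu1 : ContDiff ℝ (⊤ : ℕ∞) (fun y => ∑ I, cbC A B I y * C y (sw I)) :=
    ContDiff.sum fun I _ => (cbC_contDiff hA hB I).mul (comp_contDiff hC (sw I))
  have cu2 : ContDiff ℝ (⊤ : ℕ∞) (fun y => ∑ I, cbC B C I y * A y (sw I)) :=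
    ContDiff.sum fun I _ => (cbC_contDiff hB hC I).mul (comp_contDiff hA (sw I))
  have cu3 : ContDiff ℝ (⊤ : ℕ∞) (fun y => ∑ I, cbC C A I y * B y (sw I)) :=
    ContDiff.sum fun I _ => (cbC_contDiff hC hA I).mul (comp_contDiff hB (sw I))
  have du1 := cu1.differentiable (by simp)
  have du2 := cu2.differentiable (by simp)
  have du3 := cu3.differentiable (by simp)
  have h : nij A B C = fun y => 1/3 * ((∑ I, cbC A B I y * C y (sw I))
      + (∑ I, cbC B C I y * A y (sw I)) + (∑ I, cbC C A I y * B y (sw I))) := by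
    funext y
    unfold nij
    rw [nij_contract A B C y, nij_contract B C A y, nij_contract C A B y]
  rw [h]
  rw [pd_const_mul (((du1.fun_add du2).fun_add du3).differentiableAt) (1/3) P]
  rw [pd_add ((du1.fun_add du2).differentiableAt) du3.differentiableAt P,
    pd_add du1.differentiableAt du2.differentiableAt P]
  rw [pd_sum (fun I => (((cbC_contDiff hA hB I).mul
      (comp_contDiff hC (sw I))).differentiable (by simp)).differentiableAt) P,
    pd_sum (fun I => (((cbC_contDiff hB hC I).mul
      (comp_contDiff hA (sw I))).differentiable (by simp)).differentiableAt) P,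
    pd_sum (fun I => (((cbC_contDiff hC hA I).mul
      (comp_contDiff hB (sw I))).differentiable (by simp)).differentiableAt) P]
  rw [Finset.sum_congr rfl (fun I (_ : I ∈ Finset.univ) => pd_cb_mul C hA hB hC I P x),
    Finset.sum_congr rfl (fun I (_ : I ∈ Finset.univ) => pd_cb_mul A hB hC hA I P x),
    Finset.sum_congr rfl (fun I (_ : I ∈ Finset.univ) => pd_cb_mul B hC hA hB I P x)]
  simp only [← Finset.sum_add_distrib, Finset.mul_sum]
  refine Finset.sum_congr rfl fun K _ => ?_
  refine Finset.sum_congr rfl fun M _ => ?_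
  simp only [Jn, d1]
  ring

lemma scJ_eq (A B C : DSpace d → DSpace d) (L : DIdx d) (x : DSpace d) :
    scJ A B C L x = ∑ K, ∑ M, Jsc (A x) (B x) (d1 A x) (d1 B x) (d1 C x) L K M := by
  unfold scJ
  simp only [low_eq, pdU_eq]
  rw [Finset.mul_sum]
  refine Finset.sum_congr rfl fun K _ => ?_
  rw [Finset.sum_mul, Finset.mul_sum]
  refine Finset.sum_congr rfl fun M _ => ?_
  simp only [Jsc, d1]

end St14
namespace St14

open Finset

variable {d : ℕ}

/-- the combined double-sum integrand: Jacobiator minus claimed RHS -/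
def toth (a b c : DIdx d → ℝ) (da db dc : DIdx d → DIdx d → ℝ)
    (dda ddb ddc : DIdx d → DIdx d → DIdx d → ℝ) (L K M : DIdx d) : ℝ :=
  J1 a b c da db dc dda ddb L K M + J1 b c a db dc da ddb ddc L K M
  + J1 c a b dc da db ddc dda L K M
  - (1/2 * Jn a b c da db dc dda ddb ddc (sw L) K M
     + (Jsc a b da db dc L K M + Jsc b c db dc da L K M + Jsc c a dc da db L K M))

lemma H8 (a b c : DIdx d → ℝ) (da db dc : DIdx d → DIdx d → ℝ)
    (dda ddb ddc : DIdx d → DIdx d → DIdx d → ℝ)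
    (ha : ∀ p q r, dda p q r = dda q p r)
    (hb : ∀ p q r, ddb p q r = ddb q p r)
    (hc : ∀ p q r, ddc p q r = ddc q p r) (L K M : DIdx d) :
    toth a b c da db dc dda ddb ddc L K M
    + toth a b c da db dc dda ddb ddc L (sw K) M
    + toth a b c da db dc dda ddb ddc L K (sw M)
    + toth a b c da db dc dda ddb ddc L (sw K) (sw M)
    + toth a b c da db dc dda ddb ddc L M K
    + toth a b c da db dc dda ddb ddc L (sw M) K
    + toth a b c da db dc dda ddb ddc L M (sw K)
    + toth a b c da db dc dda ddb ddc L (sw M) (sw K) = 0 := by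
  simp only [toth, J1, Jn, Jsc, Fs, dFs, sw_sw]
  simp only [ha (sw L) K, ha (sw L) (sw K), ha (sw L) M, ha (sw L) (sw M),
    ha M K, ha M (sw K), ha (sw M) K, ha (sw M) (sw K),
    hb (sw L) K, hb (sw L) (sw K), hb (sw L) M, hb (sw L) (sw M),
    hb M K, hb M (sw K), hb (sw M) K, hb (sw M) (sw K),
    hc (sw L) K, hc (sw L) (sw K), hc (sw L) M, hc (sw L) (sw M),
    hc M K, hc M (sw K), hc (sw M) K, hc (sw M) (sw K)]
  ring

end St14
namespace St14

open Finset

variable {d : ℕ}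

lemma core (a b c : DIdx d → ℝ) (da db dc : DIdx d → DIdx d → ℝ)
    (dda ddb ddc : DIdx d → DIdx d → DIdx d → ℝ)
    (ha : ∀ p q r, dda p q r = dda q p r)
    (hb : ∀ p q r, ddb p q r = ddb q p r)
    (hc : ∀ p q r, ddc p q r = ddc q p r) (L : DIdx d) :
    (∑ K, ∑ M, J1 a b c da db dc dda ddb L K M)
    + (∑ K, ∑ M, J1 b c a db dc da ddb ddc L K M)
    + (∑ K, ∑ M, J1 c a b dc da db ddc dda L K M)
    = 1/2 * (∑ K, ∑ M, Jn a b c da db dc dda ddb ddc (sw L) K M)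
      + ((∑ K, ∑ M, Jsc a b da db dc L K M) + (∑ K, ∑ M, Jsc b c db dc da L K M)
        + (∑ K, ∑ M, Jsc c a dc da db L K M)) := by
  set φ : DIdx d → DIdx d → ℝ := fun K M => toth a b c da db dc dda ddb ddc L K M with hφ
  have e1 : ∀ ψ : DIdx d → DIdx d → ℝ, (∑ K, ∑ M, ψ (sw K) M) = ∑ K, ∑ M, ψ K M :=
    fun ψ => sum_sw (fun K => ∑ M, ψ K M)
  have e2 : ∀ ψ : DIdx d → DIdx d → ℝ, (∑ K, ∑ M, ψ K (sw M)) = ∑ K, ∑ M, ψ K M :=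
    fun ψ => Finset.sum_congr rfl fun K _ => sum_sw (ψ K)
  have e3 : ∀ ψ : DIdx d → DIdx d → ℝ, (∑ K, ∑ M, ψ (sw K) (sw M)) = ∑ K, ∑ M, ψ K M :=
    fun ψ => (e1 (fun K M => ψ K (sw M))).trans (e2 ψ)
  have e4 : (∑ K, ∑ M, φ M K) = ∑ K, ∑ M, φ K M := Finset.sum_comm
  have e5 : (∑ K, ∑ M, φ (sw M) K) = ∑ K, ∑ M, φ K M :=
    (Finset.sum_comm (f := fun K M => φ (sw M) K)).trans (e1 φ)
  have e6 : (∑ K, ∑ M, φ M (sw K)) = ∑ K, ∑ M, φ K M :=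
    (Finset.sum_comm (f := fun K M => φ M (sw K))).trans (e2 φ)
  have e7 : (∑ K, ∑ M, φ (sw M) (sw K)) = ∑ K, ∑ M, φ K M :=
    (Finset.sum_comm (f := fun K M => φ (sw M) (sw K))).trans (e3 φ)
  have E : (∑ K, ∑ M, (φ K M + φ (sw K) M + φ K (sw M) + φ (sw K) (sw M)
      + φ M K + φ (sw M) K + φ M (sw K) + φ (sw M) (sw K))) = 0 :=
    Finset.sum_eq_zero fun K _ => Finset.sum_eq_zero fun M _ =>
      H8 a b c da db dc dda ddb ddc ha hb hc L K M
  simp only [Finset.sum_add_distrib] at E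
  rw [e1 φ, e2 φ, e3 φ, e4, e5, e6, e7] at E
  have key : (∑ K, ∑ M, φ K M) = 0 := by linarith
  have expand : (∑ K, ∑ M, φ K M)
      = (∑ K, ∑ M, J1 a b c da db dc dda ddb L K M)
      + (∑ K, ∑ M, J1 b c a db dc da ddb ddc L K M)
      + (∑ K, ∑ M, J1 c a b dc da db ddc dda L K M)
      - (1/2 * (∑ K, ∑ M, Jn a b c da db dc dda ddb ddc (sw L) K M)
        + ((∑ K, ∑ M, Jsc a b da db dc L K M) + (∑ K, ∑ M, Jsc b c db dc da L K M)
          + (∑ K, ∑ M, Jsc c a dc da db L K M))) := by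
    simp only [hφ, toth, Finset.sum_add_distrib, Finset.sum_sub_distrib,
      ← Finset.mul_sum]
  rw [key] at expand
  linarith

end St14
namespace St14

open Finset

variable {d : ℕ}

lemma d2_symm {A : DSpace d → DSpace d} (hA : ContDiff ℝ (⊤ : ℕ∞) A) (x : DSpace d) :
    ∀ p q r, d2 A x p q r = d2 A x q p r :=
  fun p q r => pd_swap (comp_contDiff hA r) p q x

lemma main1 {A B C : DSpace d → DSpace d} (hA : ContDiff ℝ (⊤ : ℕ∞) A) (hB : ContDiff ℝ (⊤ : ℕ∞) B)
    (hC : ContDiff ℝ (⊤ : ℕ∞) C) (L : DIdx d) (x : DSpace d) :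
    cbC (fun y M => cbC A B M y) C L x + cbC (fun y M => cbC B C M y) A L x
        + cbC (fun y M => cbC C A M y) B L x
      = (1/2) * (∑ K, eta L K * pd (nij A B C) K x)
        + (scJ A B C L x + scJ B C A L x + scJ C A B L x) := by
  have hs : (∑ K, eta L K * pd (nij A B C) K x) = pd (nij A B C) (sw L) x :=
    sum_eta L (fun K => pd (nij A B C) K x)
  rw [Touter C hA hB L x, Touter A hB hC L x, Touter B hC hA L x, hs,
    pd_nij hA hB hC (sw L) x, scJ_eq A B C L x, scJ_eq B C A L x, scJ_eq C A B L x]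
  exact core (A x) (B x) (C x) (d1 A x) (d1 B x) (d1 C x) (d2 A x) (d2 B x) (d2 C x)
    (d2_symm hA x) (d2_symm hB x) (d2_symm hC x) L

lemma scJ_zero (A B C : DSpace d → DSpace d) (L : DIdx d) (x : DSpace d)
    (h1 : ∀ I, (∑ K, pd (fun y => B y I) K x * pd (fun y => C y L) (sw K) x) = 0)
    (h2 : ∀ I, (∑ K, pd (fun y => A y I) K x * pd (fun y => C y L) (sw K) x) = 0) :
    scJ A B C L x = 0 := by
  unfold scJ
  simp only [low_eq, pdU_eq]
  have main : (∑ J, (∑ I, (A x I * pd (fun y => B y (sw I)) J x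
      - B x I * pd (fun y => A y (sw I)) J x)) * pd (fun y => C y L) (sw J) x) = 0 := by
    have step : ∀ J ∈ Finset.univ (α := DIdx d),
        (∑ I, (A x I * pd (fun y => B y (sw I)) J x
            - B x I * pd (fun y => A y (sw I)) J x)) * pd (fun y => C y L) (sw J) x
        = ∑ I, (A x I * (pd (fun y => B y (sw I)) J x * pd (fun y => C y L) (sw J) x)
            - B x I * (pd (fun y => A y (sw I)) J x * pd (fun y => C y L) (sw J) x)) := by
      intro J _
      rw [Finset.sum_mul]
      exact Finset.sum_congr rfl fun I _ => by ring
    rw [Finset.sum_congr rfl step, Finset.sum_comm]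
    refine Finset.sum_eq_zero fun I _ => ?_
    rw [Finset.sum_sub_distrib, ← Finset.mul_sum, ← Finset.mul_sum, h1 (sw I), h2 (sw I)]
    ring
  rw [main, mul_zero]

end St14


open St14 in
/-- The Jacobiator of the untwisted C-bracket equals
`𝒟𝒩(A,B,C) + SC_Jac(A,B,C)`, and on the strong constraint equals `𝒟𝒩(A,B,C)`,
as for a Courant algebroid. -/
theorem statement14 {d : ℕ} (A B C : DSpace d → DSpace d)
    (hA : ContDiff ℝ (⊤ : ℕ∞) A) (hB : ContDiff ℝ (⊤ : ℕ∞) B) (hC : ContDiff ℝ (⊤ : ℕ∞) C) :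
    (∀ (L : DIdx d) (x : DSpace d),
      cbC (fun y M => cbC A B M y) C L x + cbC (fun y M => cbC B C M y) A L x
          + cbC (fun y M => cbC C A M y) B L x
        = (1/2) * (∑ K, eta L K * pd (nij A B C) K x)
          + (scJ A B C L x + scJ B C A L x + scJ C A B L x))
    ∧ ((∀ V W : DSpace d → DSpace d,
          (V = A ∨ V = B ∨ V = C) → (W = A ∨ W = B ∨ W = C) →
          ∀ (I J : DIdx d) (x : DSpace d),
            ∑ K, ∑ M, eta K M * pd (fun y => V y I) K x * pd (fun y => W y J) M x = 0) →
        ∀ (L : DIdx d) (x : DSpace d),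
          cbC (fun y M => cbC A B M y) C L x + cbC (fun y M => cbC B C M y) A L x
              + cbC (fun y M => cbC C A M y) B L x
            = (1/2) * ∑ K, eta L K * pd (nij A B C) K x) := by
  constructor
  · exact St14.main1 hA hB hC
  · intro SC L x
    have sc0 : ∀ (V W : DSpace d → DSpace d), (V = A ∨ V = B ∨ V = C) →
        (W = A ∨ W = B ∨ W = C) → ∀ (I J : DIdx d) (x : DSpace d),
        (∑ K, pd (fun y => V y I) K x * pd (fun y => W y J) (sw K) x) = 0 := by
      intro V W hV hW I J x
      have h2 : (∑ K, pd (fun y => V y I) K x * pd (fun y => W y J) (sw K) x)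
          = ∑ K, ∑ M, eta K M * pd (fun y => V y I) K x * pd (fun y => W y J) M x := by
        refine Finset.sum_congr rfl fun K _ => ?_
        have e := St14.sum_eta K (fun M => pd (fun y => V y I) K x * pd (fun y => W y J) M x)
        calc pd (fun y => V y I) K x * pd (fun y => W y J) (sw K) x
            = ∑ M, eta K M * (pd (fun y => V y I) K x * pd (fun y => W y J) M x) := e.symm
          _ = ∑ M, eta K M * pd (fun y => V y I) K x * pd (fun y => W y J) M x :=
              Finset.sum_congr rfl fun M _ => by ring
      rw [h2]
      exact SC V W hV hW I J x
    have oA : A = A ∨ A = B ∨ A = C := Or.inl rfl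
    have oB : B = A ∨ B = B ∨ B = C := Or.inr (Or.inl rfl)
    have oC : C = A ∨ C = B ∨ C = C := Or.inr (Or.inr rfl)
    have z1 : scJ A B C L x = 0 :=
      St14.scJ_zero A B C L x (fun I => sc0 B C oB oC I L x) (fun I => sc0 A C oA oC I L x)
    have z2 : scJ B C A L x = 0 :=
      St14.scJ_zero B C A L x (fun I => sc0 C A oC oA I L x) (fun I => sc0 B A oB oA I L x)
    have z3 : scJ C A B L x = 0 :=
      St14.scJ_zero C A B L x (fun I => sc0 A B oA oB I L x) (fun I => sc0 C B oC oB I L x)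
    rw [St14.main1 hA hB hC L x, z1, z2, z3]
    ring
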